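/- arXiv:1904.00321 — 3 statements merged into one kernel-verified Lean document; each statement's English description precedes it below -/
import Mathlib

section
/- Every nonempty compact Hausdorff topological semigroup (a semigroup with jointly continuous multiplication) contains an idempotent element. -/
/-- Ellis–Nakamura: every nonempty compact Hausdorff topological semigroup
contains an idempotent. -/
theorem stmt_0 (S : Type*) [Nonempty S] [TopologicalSpace S] [CompactSpace S] [T2Space S]
    (mul : S → S → S)
    (hassoc : ∀ a b c : S, mul (mul a b) c = mul a (mul b c))
    (hcont : Continuous fun p : S × S => mul p.1 p.2) :
    ∃ e : S, mul e e = e := by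
  let : Semigroup S := { mul, mul_assoc := hassoc }
  exact exists_idempotent_of_compact_t2_of_continuous_mul_left fun r =>
    hcont.comp (Continuous.prodMk_left r)
end

section
/- Let G and H be abelian groups, T ≤ G a subgroup, and π : G → ℝ^s a surjective group homomorphism with kernel T. Let U ⊆ G be a symmetric subset containing T and let φ : U → H be such that φ(x + y) = φ(x) + φ(y) whenever x, y, x + y ∈ U. Suppose there is a convex open neighborhood B of 0 in ℝ^s with π⁻¹(B) ⊆ U. Then φ extends to a group homomorphism ψ : G → H agreeing with φ on π⁻¹(B). -/
/-!
Write `x = N • y + z` with `π z = 0` and `π y ∈ B`, which is possible for every `N` large enough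
because `B` absorbs `π x`, and put `ψ x = N • φ y + φ z`. Convexity of `B` makes the partial
multiples `j • y`, `j ≤ N`, stay in `π⁻¹(B)`, so that `φ (N • y) = N • φ y`; comparing two
representations through a common refinement `y = M • u + t` shows that `ψ x` does not depend on the
choice, and choosing the representations of `a`, `b` and `a + b` with a common `N` makes `ψ`
additive.
-/

open Filter

section

variable {G H V : Type*} [AddCommGroup G] [AddCommGroup H] [AddCommGroup V]

def IsLocalAddHom (W : Set G) (φ : G → H) : Prop :=
  ∀ x ∈ W, ∀ y ∈ W, x + y ∈ W → φ (x + y) = φ x + φ y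

namespace IsLocalAddHom

variable {W W' : Set G} {φ : G → H}

theorem mono (h : IsLocalAddHom W φ) (hW : W' ⊆ W) : IsLocalAddHom W' φ :=
  fun x hx y hy hxy => h x (hW hx) y (hW hy) (hW hxy)

theorem map_zero (h : IsLocalAddHom W φ) (h0 : (0 : G) ∈ W) : φ 0 = 0 := by
  simpa using h 0 h0 0 h0 (by simpa using h0)

theorem map_nsmul (h : IsLocalAddHom W φ) {u : G} {k : ℕ} (hu : ∀ j ≤ k, j • u ∈ W) :
    φ (k • u) = k • φ u := by
  induction k with
  | zero => simpa using h.map_zero (by simpa using hu 0 le_rfl)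
  | succ k ih =>
    have hk : k • u + u ∈ W := by rw [← succ_nsmul]; exact hu _ le_rfl
    rw [succ_nsmul, h _ (hu k k.le_succ) u (by simpa using hu 1 (by omega)) hk,
      ih fun j hj => hu j (hj.trans k.le_succ), succ_nsmul]

end IsLocalAddHom

variable {π : G →+ V} {B : Set V} {φ : G → H}

theorem IsLocalAddHom.map_add_of_map_eq_zero (h : IsLocalAddHom (π ⁻¹' B) φ)
    (hB0 : 0 ∈ B) {x t : G} (hx : π x ∈ B) (ht : π t = 0) : φ (x + t) = φ x + φ t :=
  h x hx t (by simpa [ht] using hB0) (by simpa [ht] using hx)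

/-- The value `N • φ y + φ z` assigned to `x = N • y + z`; it is only used when `π x = N • π y`,
i.e. when `z` lies in the kernel of `π`. -/
def scaledValue (φ : G → H) (N : ℕ) (y x : G) : H :=
  N • φ y + φ (x - N • y)

theorem scaledValue_add (h : IsLocalAddHom (π ⁻¹' B) φ) (hB0 : 0 ∈ B) {a b ya yb : G} {N : ℕ}
    (hya : π ya ∈ B) (hyb : π yb ∈ B) (hyab : π (ya + yb) ∈ B)
    (ha : π a = N • π ya) (hb : π b = N • π yb) :
    scaledValue φ N (ya + yb) (a + b) = scaledValue φ N ya a + scaledValue φ N yb b := by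
  have hza : π (a - N • ya) = 0 := by simp [ha]
  have hzb : π (b - N • yb) = 0 := by simp [hb]
  have hz : a + b - N • (ya + yb) = (a - N • ya) + (b - N • yb) := by rw [smul_add]; abel
  rw [scaledValue, scaledValue, scaledValue, h _ hya _ hyb hyab, hz,
    h.map_add_of_map_eq_zero hB0 (by simpa [hza] using hB0) hzb, smul_add]
  abel

variable [Module ℝ V]

theorem Convex.nsmul_mem_of_le (hB : Convex ℝ B) (hB0 : 0 ∈ B) {v : V} {j k : ℕ}
    (hk : k • v ∈ B) (hjk : j ≤ k) : j • v ∈ B := by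
  rcases Nat.eq_zero_or_pos k with rfl | hk0
  · simpa [Nat.le_zero.mp hjk] using hB0
  have hkR : (0 : ℝ) < k := by exact_mod_cast hk0
  have hjv : j • v = ((j : ℝ) / k) • (k • v) := by
    rw [← Nat.cast_smul_eq_nsmul ℝ k, ← Nat.cast_smul_eq_nsmul ℝ j, smul_smul,
      div_mul_cancel₀ _ hkR.ne']
  rw [hjv]
  exact hB.smul_mem_of_zero_mem hB0 hk
    ⟨by positivity, (div_le_one hkR).mpr (by exact_mod_cast hjk)⟩

theorem nsmul_inv_smul_real {N : ℕ} (hN : N ≠ 0) (v : V) : N • ((N : ℝ)⁻¹ • v) = v := by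
  rw [← Nat.cast_smul_eq_nsmul ℝ, smul_inv_smul₀ (Nat.cast_ne_zero.mpr hN)]

theorem nsmul_left_cancel_real {N : ℕ} (hN : N ≠ 0) {a b : V} (h : N • a = N • b) : a = b := by
  rwa [← Nat.cast_smul_eq_nsmul ℝ, ← Nat.cast_smul_eq_nsmul ℝ,
    smul_right_inj (Nat.cast_ne_zero.mpr hN)] at h

theorem Absorbent.eventually_inv_natCast_smul_mem (hB : Absorbent ℝ B) (v : V) :
    ∀ᶠ N : ℕ in atTop, (N : ℝ)⁻¹ • v ∈ B :=
  (tendsto_inv_atTop_nhdsGT_zero.comp tendsto_natCast_atTop_atTop).mono_right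
    (nhdsGT_le_nhdsNE 0) |>.eventually (hB.eventually_nhdsNE_zero v)

theorem IsLocalAddHom.map_nsmul_add_of_map_eq_zero (h : IsLocalAddHom (π ⁻¹' B) φ)
    (hB : Convex ℝ B) (hB0 : 0 ∈ B) {u t : G} {k : ℕ} (hk : k • π u ∈ B) (ht : π t = 0) :
    φ (k • u + t) = k • φ u + φ t := by
  rw [h.map_add_of_map_eq_zero hB0 (by simpa using hk) ht,
    h.map_nsmul fun j hj => by simpa using hB.nsmul_mem_of_le hB0 hk hj]

theorem scaledValue_eq_of_map_eq_nsmul (h : IsLocalAddHom (π ⁻¹' B) φ) (hB : Convex ℝ B)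
    (hB0 : 0 ∈ B) {x y u : G} {N M : ℕ} (hy : π y ∈ B) (hxy : π x = N • π y)
    (hyu : π y = M • π u) : scaledValue φ N y x = scaledValue φ (N * M) u x := by
  set t := y - M • u
  have ht : π t = 0 := by simp [t, hyu]
  have hφy : φ y = M • φ u + φ t := by
    rw [← h.map_nsmul_add_of_map_eq_zero hB hB0 (hyu ▸ hy) ht, add_sub_cancel]
  have hφx : φ (x - (N * M) • u) = N • φ t + φ (x - N • y) := by
    have hx : π (x - N • y) = 0 := by simp [hxy]
    rw [← h.map_nsmul_add_of_map_eq_zero hB hB0 (by simpa [ht] using hB0) hx]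
    congr 1
    simp only [t, mul_nsmul', smul_sub]
    abel
  rw [scaledValue, scaledValue, hφx, hφy, mul_nsmul', smul_add]
  abel

theorem scaledValue_eq (hπ : Function.Surjective π) (h : IsLocalAddHom (π ⁻¹' B) φ)
    (hB : Convex ℝ B) (hB0 : 0 ∈ B) {x y w : G} {N M : ℕ} (hN : N ≠ 0) (hM : M ≠ 0)
    (hy : π y ∈ B) (hw : π w ∈ B) (hxy : π x = N • π y) (hxw : π x = M • π w) :
    scaledValue φ N y x = scaledValue φ M w x := by
  obtain ⟨u, hu⟩ := hπ (((N * M : ℕ) : ℝ)⁻¹ • π x)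
  have hxu : π x = (N * M) • π u := by rw [hu, nsmul_inv_smul_real (mul_ne_zero hN hM)]
  have hyu : π y = M • π u := nsmul_left_cancel_real hN (by rw [← hxy, hxu, mul_nsmul'])
  have hwu : π w = N • π u :=
    nsmul_left_cancel_real hM (by rw [← hxw, hxu, mul_comm, mul_nsmul'])
  rw [scaledValue_eq_of_map_eq_nsmul h hB hB0 hy hxy hyu,
    scaledValue_eq_of_map_eq_nsmul h hB hB0 hw hxw hwu, mul_comm]

theorem exists_common_root (hπ : Function.Surjective π) (hB : Absorbent ℝ B) (a b : G) :
    ∃ N : ℕ, N ≠ 0 ∧ ∃ ya yb : G, π ya ∈ B ∧ π yb ∈ B ∧ π (ya + yb) ∈ B ∧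
      π a = N • π ya ∧ π b = N • π yb := by
  obtain ⟨N, hN, ha, hb, hab⟩ := ((eventually_ne_atTop 0).and
    ((hB.eventually_inv_natCast_smul_mem (π a)).and
      ((hB.eventually_inv_natCast_smul_mem (π b)).and
        (hB.eventually_inv_natCast_smul_mem (π (a + b)))))).exists
  obtain ⟨ya, hya⟩ := hπ ((N : ℝ)⁻¹ • π a)
  obtain ⟨yb, hyb⟩ := hπ ((N : ℝ)⁻¹ • π b)
  refine ⟨N, hN, ya, yb, hya ▸ ha, hyb ▸ hb, ?_, ?_, ?_⟩
  · rwa [map_add, hya, hyb, ← smul_add, ← map_add]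
  · rw [hya, nsmul_inv_smul_real hN]
  · rw [hyb, nsmul_inv_smul_real hN]

theorem IsLocalAddHom.exists_addMonoidHom_eqOn (hπ : Function.Surjective π)
    (h : IsLocalAddHom (π ⁻¹' B) φ) (hB : Convex ℝ B) (hB0 : 0 ∈ B) (hBabs : Absorbent ℝ B) :
    ∃ ψ : G →+ H, Set.EqOn ψ φ (π ⁻¹' B) := by
  have hroot : ∀ x, ∃ N : ℕ, N ≠ 0 ∧ ∃ y, π y ∈ B ∧ π x = N • π y := fun x => by
    obtain ⟨N, hN, y, -, hy, -, -, hx, -⟩ := exists_common_root hπ hBabs x 0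
    exact ⟨N, hN, y, hy, hx⟩
  choose N hN y hy hxy using hroot
  have hψ : ∀ {x z : G} {M : ℕ}, M ≠ 0 → π z ∈ B → π x = M • π z →
      scaledValue φ (N x) (y x) x = scaledValue φ M z x := fun hM hz hxz =>
    scaledValue_eq hπ h hB hB0 (hN _) hM (hy _) hz (hxy _) hxz
  refine ⟨AddMonoidHom.mk' (fun x => scaledValue φ (N x) (y x) x) fun a b => ?_, fun x hx => ?_⟩
  · obtain ⟨M, hM, ya, yb, hya, hyb, hyab, ha, hb⟩ := exists_common_root hπ hBabs a b
    rw [hψ hM hya ha, hψ hM hyb hb, hψ hM hyab (by rw [map_add, map_add, ha, hb, smul_add])]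
    exact scaledValue_add h hB0 hya hyb hyab ha hb
  · change scaledValue φ (N x) (y x) x = φ x
    rw [hψ one_ne_zero hx (one_nsmul _).symm, scaledValue, one_nsmul, one_nsmul, sub_self,
      h.map_zero (by simpa using hB0), add_zero]

end

theorem stmt_5_general (G H : Type*) [AddCommGroup G] [AddCommGroup H] (s : ℕ)
    (π : G →+ (Fin s → ℝ))
    (hπsurj : Function.Surjective π)
    (U : Set G)
    (φ : G → H)
    (hφ : ∀ x y, x ∈ U → y ∈ U → x + y ∈ U → φ (x + y) = φ x + φ y)
    (B : Set (Fin s → ℝ)) (hBconv : Convex ℝ B) (hBopen : IsOpen B)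
    (hB0 : (0 : Fin s → ℝ) ∈ B) (hBU : π ⁻¹' B ⊆ U) :
    ∃ ψ : G →+ H, ∀ x ∈ π ⁻¹' B, ψ x = φ x := by
  have hU : IsLocalAddHom U φ := fun x hx y hy hxy => hφ x y hx hy hxy
  exact (hU.mono hBU).exists_addMonoidHom_eqOn hπsurj hBconv hB0
    (absorbent_nhds_zero (hBopen.mem_nhds hB0))

/-- Extension of a local homomorphism along a surjection π : G → ℝ^s with kernel T. -/
theorem stmt_5 (G H : Type*) [AddCommGroup G] [AddCommGroup H] (s : ℕ)
    (T : AddSubgroup G) (π : G →+ (Fin s → ℝ))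
    (hπsurj : Function.Surjective π) (hker : π.ker = T)
    (U : Set G) (hUsymm : -U = U) (hTU : (T : Set G) ⊆ U)
    (φ : G → H)
    (hφ : ∀ x y, x ∈ U → y ∈ U → x + y ∈ U → φ (x + y) = φ x + φ y)
    (B : Set (Fin s → ℝ)) (hBconv : Convex ℝ B) (hBopen : IsOpen B)
    (hB0 : (0 : Fin s → ℝ) ∈ B) (hBU : π ⁻¹' B ⊆ U) :
    ∃ ψ : G →+ H, ∀ x ∈ π ⁻¹' B, ψ x = φ x :=
  stmt_5_general G H s π hπsurj U φ hφ B hBconv hBopen hB0 hBU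
end

section
/- Let G be a group (written multiplicatively) and suppose n, m are endomorphisms of an abelian group A and d ∈ A such that the operation x ⊕ y = n(x) + m(y) + d on A is associative and both left- and right-cancellative. Then n and m are idempotent injective endomorphisms with n ∘ m = m ∘ n, n(d) = m(d); if moreover n and m are bijective, then n = m = id and (A, ⊕) is the group A with identity −d, i.e., x ⊕ y = x + y + d. -/
/-!
Expanding associativity of `x ⊕ y = n x + m y + d` by additivity gives
`n (n x) + n (m y) + m z + n d = n x + m (n y) + m (m z) + m d`. Setting two of `x, y, z`
to `0` yields in turn `n d = m d`, `n ∘ n = n`, `m ∘ m = m` and `n ∘ m = m ∘ n`.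
Cancellativity makes `n` and `m` injective, and an injective idempotent is the identity.
-/

theorem AddMonoidHom.eq_id_of_comp_self_of_injective {M : Type*} [AddZeroClass M]
    {f : M →+ M} (hf : f.comp f = f) (hinj : Function.Injective f) :
    f = AddMonoidHom.id M :=
  AddMonoidHom.ext fun x => hinj (DFunLike.congr_fun hf x)

section AffineOperation

variable {A : Type*} [AddCommGroup A] {n m : A →+ A} {d : A}

theorem assoc_expanded
    (hassoc : ∀ x y z : A, n (n x + m y + d) + m z + d = n x + m (n y + m z + d) + d)
    (x y z : A) : n (n x) + n (m y) + m z + n d = n x + m (n y) + m (m z) + m d := by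
  have h := hassoc x y z
  simp only [map_add] at h
  rw [← sub_eq_zero] at h ⊢
  rw [← h]
  abel

theorem map_eq_of_assoc
    (hassoc : ∀ x y z : A, n (n x + m y + d) + m z + d = n x + m (n y + m z + d) + d) :
    n d = m d := by
  simpa using assoc_expanded hassoc 0 0 0

theorem comp_self_left_of_assoc
    (hassoc : ∀ x y z : A, n (n x + m y + d) + m z + d = n x + m (n y + m z + d) + d) :
    n.comp n = n := by
  ext x
  have h := assoc_expanded hassoc x 0 0
  simp only [map_zero, add_zero, map_eq_of_assoc hassoc] at h
  exact add_right_cancel h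

theorem comp_self_right_of_assoc
    (hassoc : ∀ x y z : A, n (n x + m y + d) + m z + d = n x + m (n y + m z + d) + d) :
    m.comp m = m := by
  ext z
  have h := assoc_expanded hassoc 0 0 z
  simp only [map_zero, zero_add, map_eq_of_assoc hassoc] at h
  exact (add_right_cancel h).symm

theorem comp_comm_of_assoc
    (hassoc : ∀ x y z : A, n (n x + m y + d) + m z + d = n x + m (n y + m z + d) + d) :
    n.comp m = m.comp n := by
  ext y
  have h := assoc_expanded hassoc 0 y 0
  simp only [map_zero, zero_add, add_zero, map_eq_of_assoc hassoc] at h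
  exact add_right_cancel h

end AffineOperation

/-- If x ⊕ y = n(x) + m(y) + d is associative and left/right cancellative on an
abelian group A, then n, m are injective idempotent commuting endomorphisms with
n(d) = m(d); if moreover n and m are bijective then n = m = id and
x ⊕ y = x + y + d. -/
theorem stmt_13 (A : Type*) [AddCommGroup A] (n m : A →+ A) (d : A)
    (hassoc : ∀ x y z : A,
      n (n x + m y + d) + m z + d = n x + m (n y + m z + d) + d)
    (hlcancel : ∀ x y y' : A, n x + m y + d = n x + m y' + d → y = y')
    (hrcancel : ∀ x x' y : A, n x + m y + d = n x' + m y + d → x = x') :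
    (n.comp n = n ∧ m.comp m = m ∧
      Function.Injective n ∧ Function.Injective m ∧
      n.comp m = m.comp n ∧ n d = m d) ∧
    (Function.Bijective n → Function.Bijective m →
      n = AddMonoidHom.id A ∧ m = AddMonoidHom.id A ∧
      ∀ x y : A, n x + m y + d = x + y + d) := by
  have hnn := comp_self_left_of_assoc hassoc
  have hmm := comp_self_right_of_assoc hassoc
  have hn_inj : Function.Injective n := fun x x' h => hrcancel x x' 0 (by rw [h])
  have hm_inj : Function.Injective m := fun y y' h => hlcancel 0 y y' (by rw [h])
  have hn_id := AddMonoidHom.eq_id_of_comp_self_of_injective hnn hn_inj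
  have hm_id := AddMonoidHom.eq_id_of_comp_self_of_injective hmm hm_inj
  refine ⟨⟨hnn, hmm, hn_inj, hm_inj, comp_comm_of_assoc hassoc, map_eq_of_assoc hassoc⟩,
    fun _ _ => ⟨hn_id, hm_id, fun x y => by simp [hn_id, hm_id]⟩⟩
end
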